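/- arXiv:2412.03119 — 3 statements merged into one kernel-verified Lean document; each statement's English description precedes it below -/
import Mathlib

section
/- For n ≥ 1, A_{n,λ}(-1) = 2^{n+1} (2^{n+1} β_{n+1,λ/2} - β_{n+1,λ})/(n+1), where β_{n,λ} are the degenerate Bernoulli numbers; also A_{0,λ}(-1) = 1. -/
/-!
Since the degenerate Eulerian numbers vanish beyond `k = n` (an `(n+1)`-st forward difference of
the degree-`n` polynomial `x ↦ (x)_{n,λ}`), `A_{n,λ}(x) = (1 - x)^{n+1} ∑_j (j+1)_{n,λ} x^j` as
formal power series. Splitting `(j+2)_{n,λ}` by the degenerate Vandermonde identity turns this into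
a polynomial recurrence for `A_{n,λ}`, which at `x = -1` says that `A_{n,λ}(-1)/2^{n+1}` has
exponential generating function `e_λ(t)/(1 + e_λ(t))`. As `e_λ(t)^2 = e_{λ/2}(2t)`, this series
is `1 + (2t/(e_{λ/2}(2t) - 1) - t/(e_λ(t) - 1))/t`, whose coefficients are degenerate Bernoulli
numbers.
-/

open Finset PowerSeries

/-- Degenerate falling factorial `(x)_{n,λ} = x(x-λ)⋯(x-(n-1)λ)`. -/
noncomputable def dfall (l x : ℝ) (n : ℕ) : ℝ := ∏ i ∈ Finset.range n, (x - i * l)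

/-- Degenerate Eulerian number `A_λ(n,k) = ∑_{i=0}^k C(n+1,i)(-1)^i (k-i+1)_{n,λ}`. -/
noncomputable def degEulerianNum (l : ℝ) (n k : ℕ) : ℝ :=
  ∑ i ∈ Finset.range (k+1), ((n+1).choose i : ℝ) * (-1)^i * dfall l ((k : ℝ) - i + 1) n

/-- Degenerate Eulerian polynomial `A_{n,λ}(x) = ∑_{k=0}^n A_λ(n,k) x^k`. -/
noncomputable def degEulerianPoly (l : ℝ) (n : ℕ) (x : ℝ) : ℝ :=
  ∑ k ∈ Finset.range (n+1), degEulerianNum l n k * x^k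

/-- Generalized binomial coefficient `binom(y,m) = y(y-1)⋯(y-m+1)/m!`. -/
noncomputable def genBinom (y : ℝ) (m : ℕ) : ℝ :=
  (∏ i ∈ Finset.range m, (y - i)) / m.factorial

/-- Degenerate exponential `e_λ^x(t) = ∑_k (x)_{k,λ} t^k/k!` as a formal power series. -/
noncomputable def degExp (l x : ℝ) : PowerSeries ℝ :=
  PowerSeries.mk fun k => dfall l x k / k.factorial

/-- Degenerate Stirling number of the second kind (explicit formula). -/
noncomputable def degStirling2 (l : ℝ) (n k : ℕ) : ℝ :=
  (-1)^k / k.factorial * ∑ j ∈ Finset.range (k+1), (-1)^j * (k.choose j : ℝ) * dfall l j n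

lemma dfall_succ (l x : ℝ) (n : ℕ) : dfall l x (n + 1) = dfall l x n * (x - n * l) :=
  prod_range_succ _ _

lemma dfall_const_mul (c l x : ℝ) (n : ℕ) : dfall (c * l) (c * x) n = c ^ n * dfall l x n := by
  have hfactor : ∀ i ∈ range n, c * x - i * (c * l) = c * (x - i * l) := fun i _ => by ring
  rw [dfall, prod_congr rfl hfactor, prod_mul_distrib, prod_const, card_range, dfall]

lemma dfall_add (l x y : ℝ) (n : ℕ) :
    dfall l (x + y) n =
      ∑ p ∈ antidiagonal n, (n.choose p.1 : ℝ) * (dfall l x p.1 * dfall l y p.2) := by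
  induction n with
  | zero => simp [dfall]
  | succ n ih =>
    rw [sum_antidiagonal_choose_succ_mul (fun i j => dfall l x i * dfall l y j), dfall_succ, ih,
      sum_mul, ← sum_add_distrib]
    refine sum_congr rfl fun p hp => ?_
    rw [HasAntidiagonal.mem_antidiagonal] at hp
    have hsplit : x + y - (n : ℕ) * l = (x - p.1 * l) + (y - p.2 * l) := by
      rw [← hp]; push_cast; ring
    rw [hsplit, dfall_succ, dfall_succ, ← Nat.choose_symm_of_eq_add hp.symm]
    ring

lemma degExp_mul (l x y : ℝ) : degExp l x * degExp l y = degExp l (x + y) := by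
  ext n
  simp only [coeff_mul, degExp, coeff_mk]
  rw [dfall_add, sum_div]
  refine sum_congr rfl fun p hp => ?_
  rw [HasAntidiagonal.mem_antidiagonal] at hp
  subst hp
  rw [Nat.cast_add_choose]
  field_simp

lemma rescale_degExp (c l x : ℝ) : rescale c (degExp l x) = degExp (c * l) (c * x) := by
  ext n
  simp only [coeff_rescale, degExp, coeff_mk, dfall_const_mul]
  ring

lemma constantCoeff_degExp (l x : ℝ) : constantCoeff (degExp l x) = 1 := by
  simp [degExp, dfall]

lemma coeff_one_degExp (l x : ℝ) : coeff 1 (degExp l x) = x := by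
  simp [degExp, dfall]

lemma degExp_sub_one_ne_zero (l : ℝ) {x : ℝ} (hx : x ≠ 0) : degExp l x - 1 ≠ 0 := by
  intro h
  simpa [coeff_one_degExp, hx] using congrArg (coeff 1) h

lemma one_add_degExp_ne_zero (l x : ℝ) : 1 + degExp l x ≠ 0 := by
  intro h
  have := congrArg constantCoeff h
  rw [map_add, constantCoeff_degExp] at this
  norm_num at this

lemma degEulerianNum_eq_zero_of_lt (l : ℝ) {n k : ℕ} (hk : n < k) : degEulerianNum l n k = 0 := by
  set P : Polynomial ℝ := ∏ i ∈ range n, (Polynomial.X - Polynomial.C ((i : ℝ) * l))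
  have hP : ∀ x, P.eval x = dfall l x n := fun x => by simp [P, Polynomial.eval_prod, dfall]
  have hΔ := congrFun (Polynomial.fwdDiff_iter_eq_zero_of_degree_lt (P := P) (n := n + 1)
    (by rw [Polynomial.natDegree_finsetProd_X_sub_C_eq_card, card_range]; omega)) ((k : ℝ) - n)
  rw [fwdDiff_iter_eq_sum_shift, ← sum_range_reflect, Pi.zero_apply] at hΔ
  have hsub : range (n + 2) ⊆ range (k + 1) := range_subset_range.2 (by omega)
  rw [degEulerianNum, ← sum_subset hsub fun i hi hni => ?_, ← hΔ]
  · refine sum_congr rfl fun i hi => ?_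
    have hi : i ≤ n + 1 := Nat.lt_succ_iff.mp (mem_range.mp hi)
    rw [hP, show n + 1 + 1 - 1 - i = n + 1 - i by omega, Nat.sub_sub_self hi, Nat.choose_symm hi,
      zsmul_eq_mul, nsmul_one]
    push_cast [Nat.cast_sub hi]
    rw [show (k : ℝ) - n + (n + 1 - i) = k - i + 1 by ring]
    ring
  · rw [mem_range] at hi hni
    rw [Nat.choose_eq_zero_of_lt (by omega)]
    simp

lemma coeff_one_sub_X_pow (m k : ℕ) :
    coeff k ((1 - X : PowerSeries ℝ) ^ m) = (-1) ^ k * (m.choose k : ℝ) := by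
  have h : (1 - X : PowerSeries ℝ) ^ m = rescale (-1) ((1 + Polynomial.X) ^ m : Polynomial ℝ) := by
    simp [sub_eq_add_neg]
  rw [h, coeff_rescale, Polynomial.coeff_coe, Polynomial.coeff_one_add_X_pow]

noncomputable def dfallSeries (l : ℝ) (n : ℕ) : PowerSeries ℝ :=
  PowerSeries.mk fun j => dfall l ((j : ℝ) + 1) n

noncomputable def eulerianPoly (l : ℝ) (n : ℕ) : Polynomial ℝ :=
  ∑ k ∈ range (n + 1), Polynomial.C (degEulerianNum l n k) * Polynomial.X ^ k

lemma eval_eulerianPoly (l x : ℝ) (n : ℕ) : (eulerianPoly l n).eval x = degEulerianPoly l n x := by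
  simp [eulerianPoly, degEulerianPoly, Polynomial.eval_finsetSum]

lemma coeff_eulerianPoly (l : ℝ) (n k : ℕ) : (eulerianPoly l n).coeff k = degEulerianNum l n k := by
  simp only [eulerianPoly, Polynomial.finsetSum_coeff, Polynomial.coeff_C_mul_X_pow]
  rw [sum_ite_eq, ite_eq_left_iff, mem_range, not_lt]
  exact fun hk => (degEulerianNum_eq_zero_of_lt l (by omega)).symm

lemma coe_eulerianPoly (l : ℝ) (n : ℕ) :
    (eulerianPoly l n : PowerSeries ℝ) = (1 - X) ^ (n + 1) * dfallSeries l n := by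
  ext k
  rw [Polynomial.coeff_coe, coeff_eulerianPoly, coeff_mul,
    Nat.sum_antidiagonal_eq_sum_range_succ_mk, degEulerianNum]
  refine sum_congr rfl fun i hi => ?_
  rw [coeff_one_sub_X_pow, dfallSeries, coeff_mk,
    Nat.cast_sub (Nat.lt_succ_iff.mp (mem_range.mp hi))]
  ring

lemma dfallSeries_eq (l : ℝ) (n : ℕ) :
    dfallSeries l n = PowerSeries.C (dfall l 1 n) + X * ∑ p ∈ antidiagonal n,
      PowerSeries.C ((n.choose p.1 : ℝ) * dfall l 1 p.1) * dfallSeries l p.2 := by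
  ext k
  cases k with
  | zero => simp [dfallSeries]
  | succ k =>
    rw [map_add, coeff_succ_X_mul, coeff_C, if_neg k.succ_ne_zero, zero_add, map_sum, dfallSeries,
      coeff_mk, show ((k + 1 : ℕ) : ℝ) + 1 = 1 + ((k : ℝ) + 1) by push_cast; ring, dfall_add]
    simp only [coeff_C_mul, dfallSeries, coeff_mk, mul_assoc]

lemma eulerianPoly_eq (l : ℝ) (n : ℕ) :
    eulerianPoly l n = Polynomial.C (dfall l 1 n) * (1 - Polynomial.X) ^ (n + 1) +
      Polynomial.X * ∑ p ∈ antidiagonal n, Polynomial.C ((n.choose p.1 : ℝ) * dfall l 1 p.1) *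
        (1 - Polynomial.X) ^ p.1 * eulerianPoly l p.2 := by
  rw [← Polynomial.coe_inj, ← Polynomial.coeToPowerSeries.ringHom_apply,
    ← Polynomial.coeToPowerSeries.ringHom_apply]
  simp only [map_add, map_mul, map_sum, map_pow, map_sub, map_one,
    Polynomial.coeToPowerSeries.ringHom_apply, Polynomial.coe_X, Polynomial.coe_C, coe_eulerianPoly]
  rw [dfallSeries_eq, mul_add, mul_left_comm, mul_sum, mul_comm]
  congr 2
  refine sum_congr rfl fun p hp => ?_
  rw [← HasAntidiagonal.mem_antidiagonal.mp hp, map_mul, add_assoc, pow_add]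
  ring

lemma degEulerianPoly_neg_one_add_sum (l : ℝ) (n : ℕ) :
    degEulerianPoly l n (-1) + ∑ p ∈ antidiagonal n,
      (n.choose p.1 : ℝ) * dfall l 1 p.1 * 2 ^ p.1 * degEulerianPoly l p.2 (-1) =
      2 ^ (n + 1) * dfall l 1 n := by
  have h := congrArg (Polynomial.eval (-1)) (eulerianPoly_eq l n)
  simp only [Polynomial.eval_add, Polynomial.eval_mul, Polynomial.eval_C, Polynomial.eval_pow,
    Polynomial.eval_sub, Polynomial.eval_one, Polynomial.eval_X, Polynomial.eval_finsetSum,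
    eval_eulerianPoly, sub_neg_eq_add, one_add_one_eq_two] at h
  linear_combination h

noncomputable def eulerianNegOneEGF (l : ℝ) : PowerSeries ℝ :=
  PowerSeries.mk fun n => degEulerianPoly l n (-1) / (2 ^ (n + 1) * n.factorial)

lemma one_add_degExp_mul_eulerianNegOneEGF (l : ℝ) :
    (1 + degExp l 1) * eulerianNegOneEGF l = degExp l 1 := by
  ext n
  rw [add_mul, one_mul, map_add, coeff_mul]
  simp only [eulerianNegOneEGF, degExp, coeff_mk]
  have hterm : ∀ p ∈ antidiagonal n,
      dfall l 1 p.1 / p.1.factorial * (degEulerianPoly l p.2 (-1) / (2 ^ (p.2 + 1) * p.2.factorial))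
        = (n.choose p.1 : ℝ) * dfall l 1 p.1 * 2 ^ p.1 * degEulerianPoly l p.2 (-1) /
          (2 ^ (n + 1) * n.factorial) := fun p hp => by
    rw [← HasAntidiagonal.mem_antidiagonal.mp hp, Nat.cast_add_choose]
    field_simp
    ring
  rw [sum_congr rfl hterm, ← sum_div, ← add_div, degEulerianPoly_neg_one_add_sum]
  field_simp

lemma one_add_degExp_mul_rescale_two_sub (l : ℝ) {B₁ B₂ : PowerSeries ℝ}
    (h₁ : X = (degExp l 1 - 1) * B₁) (h₂ : X = (degExp (l / 2) 1 - 1) * B₂) :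
    (1 + degExp l 1) * (rescale 2 B₂ - B₁) = -X := by
  have h₂' : 2 * X = (degExp l 1 * degExp l 1 - 1) * rescale 2 B₂ := by
    rw [degExp_mul, one_add_one_eq_two]
    have h := congrArg (rescale (2 : ℝ)) h₂
    rwa [rescale_X, map_ofNat, map_mul, map_sub, map_one, rescale_degExp,
      mul_div_cancel₀ l two_ne_zero, mul_one] at h
  refine mul_left_cancel₀ (degExp_sub_one_ne_zero l one_ne_zero) ?_
  linear_combination (1 + degExp l 1) * h₁ - h₂'

/-- with `b μ n` the degenerate Bernoulli numbers `β_{n,μ}` (defined by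
`t = (e_μ(t)-1)·∑_n β_{n,μ} t^n/n!`), one has `A_{0,λ}(-1) = 1` and, for `n ≥ 1`,
`A_{n,λ}(-1) = 2^{n+1}(2^{n+1} β_{n+1,λ/2} - β_{n+1,λ})/(n+1)`. -/
theorem stmt5 (l : ℝ) (b : ℝ → ℕ → ℝ)
    (hb : ∀ μ : ℝ, (PowerSeries.X : PowerSeries ℝ) =
      (degExp μ 1 - 1) * PowerSeries.mk (fun n => b μ n / n.factorial)) :
    degEulerianPoly l 0 (-1) = 1 ∧
    ∀ n : ℕ, 1 ≤ n →
      degEulerianPoly l n (-1) =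
        2 ^ (n + 1) * (2 ^ (n + 1) * b (l / 2) (n + 1) - b l (n + 1)) / (n + 1) := by
  refine ⟨by simp [degEulerianPoly, degEulerianNum, dfall], fun n hn => ?_⟩
  set B₁ := PowerSeries.mk fun n => b l n / n.factorial
  set B₂ := PowerSeries.mk fun n => b (l / 2) n / n.factorial
  have hX : X * eulerianNegOneEGF l = X + rescale 2 B₂ - B₁ :=
    mul_left_cancel₀ (one_add_degExp_ne_zero l 1) <| by
      linear_combination X * one_add_degExp_mul_eulerianNegOneEGF l -
        one_add_degExp_mul_rescale_two_sub l (hb l) (hb (l / 2))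
  have hcoeff := congrArg (coeff (n + 1)) hX
  simp only [coeff_succ_X_mul, eulerianNegOneEGF, map_sub, map_add, coeff_X, coeff_rescale, B₁, B₂,
    coeff_mk, if_neg (by omega : n + 1 ≠ 1), Nat.factorial_succ] at hcoeff
  push_cast at hcoeff
  field_simp at hcoeff ⊢
  linear_combination hcoeff
end

section
/- (Degenerate Worpitzky identity) For every integer n ≥ 0 and all x, ∑_{k=0}^{n} binom(x+k, n) A_{-λ}(n,k) = (x)_{n,λ}, where binom(x+k, n) = (x+k)(x+k-1)···(x+k-n+1)/n! is the generalized binomial coefficient. -/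
/-! Both sides are polynomials of degree at most `n` in `x`, so it suffices to compare them at
`x = -(m + 1)` for `0 ≤ m ≤ n`. There `binom(x + k, n)` vanishes for `k > m` and equals
`(-1)^n binom(n + m - k, n)` for `k ≤ m`. Since `A_{-λ}(n, ·)` are the coefficients of
`(1 - t)^(n+1) ∑ⱼ (j + 1)_{n,-λ} tʲ`, multiplying by `(1 - t)^(-(n+1)) = ∑ⱼ binom(n + j, n) tʲ`
turns the left side into `(-1)^n (m + 1)_{n,-λ} = (-m - 1)_{n,λ}`. -/
open Finset PowerSeries

section OneSubPowTransform

variable {R : Type*} [CommRing R]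

/-- The coefficients of `(1 - t) ^ N * ∑ₖ g k * t ^ k`. -/
def oneSubPowTransform (N : ℕ) (g : ℕ → R) (k : ℕ) : R :=
  ∑ i ∈ range (k + 1), (N.choose i : R) * (-1) ^ i * g (k - i)

theorem one_sub_X_pow_eq_mk (N : ℕ) :
    ((1 - X) ^ N : R⟦X⟧) = PowerSeries.mk fun i => (N.choose i : R) * (-1) ^ i := by
  ext i
  have hterm (k : ℕ) : (-X : R⟦X⟧) ^ k * 1 ^ (N - k) * (N.choose k : R⟦X⟧)
      = C ((N.choose k : R) * (-1) ^ k) * X ^ k := by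
    simp only [neg_pow X, one_pow, mul_one, map_mul, map_pow, map_neg, map_one, map_natCast]
    ring
  rw [sub_eq_neg_add, add_pow]
  simp only [hterm, map_sum, coeff_C_mul_X_pow, sum_ite_eq, mem_range, coeff_mk]
  split_ifs with h
  · rfl
  · rw [Nat.choose_eq_zero_of_lt (by omega), Nat.cast_zero, zero_mul]

theorem sum_oneSubPowTransform_mul_choose (N : ℕ) (g : ℕ → R) (m : ℕ) :
    ∑ k ∈ range (m + 1), oneSubPowTransform (N + 1) g k * ((N + (m - k)).choose N : R) = g m := by
  have key : (1 - X) ^ (N + 1) * PowerSeries.mk g *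
      PowerSeries.mk (fun j => ((N + j).choose N : R)) = PowerSeries.mk g := by
    rw [mul_comm, ← mul_assoc, mk_add_choose_mul_one_sub_pow_eq_one, one_mul]
  have h := congrArg (coeff m) key
  simp only [one_sub_X_pow_eq_mk, coeff_mul, Finset.Nat.sum_antidiagonal_eq_sum_range_succ_mk,
    coeff_mk] at h
  exact h

end OneSubPowTransform

theorem degEulerianNum_eq_oneSubPowTransform (l : ℝ) (n k : ℕ) :
    degEulerianNum l n k = oneSubPowTransform (n + 1) (fun j => dfall l (j + 1) n) k := by
  refine sum_congr rfl fun i hi => ?_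
  dsimp only
  rw [Nat.cast_sub (Nat.lt_succ_iff.mp (mem_range.mp hi))]

theorem dfall_neg (l x : ℝ) (n : ℕ) : dfall l (-x) n = (-1) ^ n * dfall (-l) x n := by
  rw [dfall, dfall, show (-1 : ℝ) ^ n = (-1) ^ #(range n) by rw [card_range], ← prod_neg]
  exact prod_congr rfl fun i _ => by ring

theorem genBinom_natCast_eq_zero {j n : ℕ} (h : j < n) : genBinom j n = 0 := by
  rw [genBinom, prod_eq_zero (mem_range.mpr h) (sub_self _), zero_div]

theorem genBinom_neg_natCast_sub_one (j n : ℕ) :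
    genBinom (-j - 1) n = (-1) ^ n * ((n + j).choose n : ℝ) := by
  have h : ∏ i ∈ range n, (-(j : ℝ) - 1 - i) = (-1) ^ n * ((j + 1).ascFactorial n : ℝ) := by
    rw [Nat.ascFactorial_eq_prod_range, Nat.cast_prod,
      show (-1 : ℝ) ^ n = (-1) ^ #(range n) by rw [card_range], ← prod_neg]
    exact prod_congr rfl fun i _ => by push_cast; ring
  rw [genBinom, h, Nat.ascFactorial_eq_factorial_mul_choose, Nat.cast_mul, add_comm j n]
  field_simp

theorem sum_genBinom_mul_degEulerianNum_neg_natCast_sub_one (l : ℝ) {n m : ℕ} (hm : m ≤ n) :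
    ∑ k ∈ range (n + 1), genBinom (-m - 1 + k) n * degEulerianNum (-l) n k
      = dfall l (-m - 1) n := by
  have hvanish : ∀ k ∈ range (n + 1), k ∉ range (m + 1) →
      genBinom (-m - 1 + k) n * degEulerianNum (-l) n k = 0 := by
    intro k hk hkm
    simp only [mem_range] at hk hkm
    have hcast : -(m : ℝ) - 1 + k = ((k - m - 1 : ℕ) : ℝ) := by
      rw [Nat.cast_sub (by omega), Nat.cast_sub (by omega)]
      push_cast
      ring
    rw [hcast, genBinom_natCast_eq_zero (by omega), zero_mul]
  have hneg : ∀ k ∈ range (m + 1), genBinom (-m - 1 + k) n * degEulerianNum (-l) n k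
      = (-1) ^ n * (degEulerianNum (-l) n k * ((n + (m - k)).choose n : ℝ)) := by
    intro k hk
    have hcast : -(m : ℝ) - 1 + k = -((m - k : ℕ) : ℝ) - 1 := by
      rw [Nat.cast_sub (Nat.lt_succ_iff.mp (mem_range.mp hk))]
      ring
    rw [hcast, genBinom_neg_natCast_sub_one]
    ring
  rw [← sum_subset (range_subset_range.mpr (by omega)) hvanish, sum_congr rfl hneg, ← mul_sum]
  simp only [degEulerianNum_eq_oneSubPowTransform]
  rw [sum_oneSubPowTransform_mul_choose, ← neg_add', dfall_neg]

section Interpolation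

open scoped Polynomial

theorem eval_eq_of_natDegree_le_of_eval_neg_natCast_sub_one {p q : ℝ[X]} {n : ℕ}
    (hp : p.natDegree ≤ n) (hq : q.natDegree ≤ n)
    (h : ∀ m ≤ n, p.eval (-(m : ℝ) - 1) = q.eval (-(m : ℝ) - 1)) (x : ℝ) :
    p.eval x = q.eval x := by
  have hlt {r : ℝ[X]} (hr : r.natDegree ≤ n) : r.degree < #(range (n + 1)) := by
    rw [card_range]
    exact (Polynomial.degree_le_of_natDegree_le hr).trans_lt (by exact_mod_cast n.lt_succ_self)
  have hinj : Set.InjOn (fun m : ℕ => -(m : ℝ) - 1) (range (n + 1)) := fun a _ b _ hab => by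
    simpa using hab
  rw [Polynomial.eq_of_degrees_lt_of_eval_index_eq _ hinj (hlt hp) (hlt hq)
    fun m hm => h m (Nat.lt_succ_iff.mp (mem_range.mp hm))]

noncomputable def genBinomPoly (a : ℝ) (n : ℕ) : ℝ[X] :=
  Polynomial.C (n.factorial : ℝ)⁻¹ * ∏ i ∈ range n, (Polynomial.X - Polynomial.C ((i : ℝ) - a))

noncomputable def dfallPoly (l : ℝ) (n : ℕ) : ℝ[X] :=
  ∏ i ∈ range n, (Polynomial.X - Polynomial.C ((i : ℝ) * l))

theorem eval_genBinomPoly (x a : ℝ) (n : ℕ) : (genBinomPoly a n).eval x = genBinom (x + a) n := by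
  simp only [genBinomPoly, genBinom, Polynomial.eval_mul, Polynomial.eval_C, Polynomial.eval_prod,
    Polynomial.eval_sub, Polynomial.eval_X, div_eq_inv_mul]
  congr 1
  exact prod_congr rfl fun i _ => by ring

theorem eval_dfallPoly (l x : ℝ) (n : ℕ) : (dfallPoly l n).eval x = dfall l x n := by
  simp only [dfallPoly, dfall, Polynomial.eval_prod, Polynomial.eval_sub, Polynomial.eval_X,
    Polynomial.eval_C]

theorem natDegree_genBinomPoly_le (a : ℝ) (n : ℕ) : (genBinomPoly a n).natDegree ≤ n :=
  (Polynomial.natDegree_C_mul_le _ _).trans <| by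
    rw [Polynomial.natDegree_finsetProd_X_sub_C_eq_card, card_range]

theorem natDegree_dfallPoly (l : ℝ) (n : ℕ) : (dfallPoly l n).natDegree = n :=
  (Polynomial.natDegree_finsetProd_X_sub_C_eq_card _ _).trans (card_range n)

end Interpolation

/-- degenerate Worpitzky identity:
`∑_{k=0}^n binom(x+k, n) A_{-λ}(n,k) = (x)_{n,λ}` for all `x` and `n ≥ 0`. -/
theorem stmt8 (l : ℝ) (n : ℕ) (x : ℝ) :
    ∑ k ∈ Finset.range (n + 1), genBinom (x + k) n * degEulerianNum (-l) n k
      = dfall l x n := by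
  set P := ∑ k ∈ range (n + 1), Polynomial.C (degEulerianNum (-l) n k) * genBinomPoly k n
  have hP : ∀ y, P.eval y = ∑ k ∈ range (n + 1), genBinom (y + k) n * degEulerianNum (-l) n k :=
    fun y => by simp only [P, Polynomial.eval_finsetSum, Polynomial.eval_mul, Polynomial.eval_C,
      eval_genBinomPoly, mul_comm]
  have hdeg : P.natDegree ≤ n := Polynomial.natDegree_sum_le_of_forall_le _ _ fun k _ =>
    (Polynomial.natDegree_C_mul_le _ _).trans (natDegree_genBinomPoly_le _ _)
  have hnodes (m : ℕ) (hm : m ≤ n) :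
      P.eval (-(m : ℝ) - 1) = (dfallPoly l n).eval (-(m : ℝ) - 1) := by
    rw [hP, eval_dfallPoly, ← sum_genBinom_mul_degEulerianNum_neg_natCast_sub_one l hm]
  rw [← hP, ← eval_dfallPoly]
  exact eval_eq_of_natDegree_le_of_eval_neg_natCast_sub_one hdeg (natDegree_dfallPoly l n).le
    hnodes x
end

section
/- For positive integers m, n: ∑_{k=1}^{m} (k)_{n,λ} = ∑_{j=0}^{n} A_{-λ}(n,j) binom(m+j+1, n+1). -/
open Finset PowerSeries

/-!
The degenerate Eulerian numbers `A_μ(n, ·)` are the coefficients of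
`(1 - t)^(n+1) ∑_j (j+1)_{n,μ} t^j`. Multiplying back by `(1 - t)^-(n+1) = ∑_s C(n+s, n) t^s`
expands `(j+1)_{n,μ}` in the binomials `C(n+j-r, n)`; as `(x)_{n,μ}` is a polynomial of degree `n`
vanishing at `0`, its `(n+1)`-st difference vanishes and only `r < n` contributes. Reading that
difference at integer points and using `(-1)^n (-x)_{n,λ} = (x)_{n,-λ}` gives the reciprocity
`A_λ(n, q) = A_{-λ}(n, n-1-q)`, hence Worpitzky's identity `(k)_{n,λ} = ∑_j A_{-λ}(n,j) C(k+j, n)`,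
which Pascal's rule sums over `k`.
-/

/-- `degEulerianNum l n` is definitionally `eulerCoeff n (dfall l · n)`. -/
noncomputable def eulerCoeff (n : ℕ) (f : ℝ → ℝ) (k : ℕ) : ℝ :=
  ∑ i ∈ range (k + 1), ((n + 1).choose i : ℝ) * (-1) ^ i * f ((k : ℝ) - i + 1)

lemma coeff_one_sub_X_pow_s12 {R : Type*} [CommRing R] (d i : ℕ) :
    coeff i ((1 - X : PowerSeries R) ^ d) = (-1) ^ i * d.choose i := by
  have h : (1 - X : PowerSeries R) = rescale (-1) (1 + X) := by
    rw [map_add, map_one, rescale_X, map_neg, map_one, neg_one_mul, sub_eq_add_neg]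
  rw [h, ← map_pow, coeff_rescale, ← Polynomial.coe_X, ← Polynomial.coe_one, ← Polynomial.coe_add,
    ← Polynomial.coe_pow, Polynomial.coeff_coe, Polynomial.coeff_one_add_X_pow]

lemma coeff_one_sub_X_pow_mul_mk (n : ℕ) (f : ℝ → ℝ) (k : ℕ) :
    coeff k ((1 - X) ^ (n + 1) * PowerSeries.mk fun j ↦ f (j + 1)) = eulerCoeff n f k := by
  rw [coeff_mul, Nat.sum_antidiagonal_eq_sum_range_succ_mk, eulerCoeff]
  refine sum_congr rfl fun i hi ↦ ?_
  rw [coeff_one_sub_X_pow_s12, coeff_mk, Nat.cast_sub (by simpa [Nat.lt_succ_iff] using hi)]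
  ring_nf

lemma sum_eulerCoeff_mul_choose (n : ℕ) (f : ℝ → ℝ) (j : ℕ) :
    ∑ r ∈ range (j + 1), eulerCoeff n f r * (n + j - r).choose n = f (j + 1) := by
  have h : (PowerSeries.mk fun j ↦ f (j + 1)) =
      ((1 - X) ^ (n + 1) * PowerSeries.mk fun j ↦ f (j + 1)) *
        PowerSeries.mk fun t ↦ ((n + t).choose n : ℝ) := by
    rw [mul_comm, ← mul_assoc, mk_add_choose_mul_one_sub_pow_eq_one, one_mul]
  have hj := congrArg (coeff j) h
  rw [coeff_mk, coeff_mul, Nat.sum_antidiagonal_eq_sum_range_succ_mk] at hj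
  rw [hj]
  refine sum_congr rfl fun r hr ↦ ?_
  rw [coeff_one_sub_X_pow_mul_mk, coeff_mk,
    Nat.add_sub_assoc (by simpa [Nat.lt_succ_iff] using hr)]

lemma neg_one_pow_eq_neg_neg_one_pow {R : Type*} [Monoid R] [HasDistribNeg R] {a b : ℕ}
    (h : Odd (a + b)) : (-1 : R) ^ a = -(-1) ^ b := by
  have hb : (-1 : R) ^ b * (-1) ^ b = 1 := by
    rw [← pow_add, ← two_mul, pow_mul, neg_one_sq, one_pow]
  calc (-1 : R) ^ a = (-1) ^ a * ((-1) ^ b * (-1) ^ b) := by rw [hb, mul_one]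
    _ = (-1) ^ (a + b) * (-1) ^ b := by rw [pow_add, mul_assoc]
    _ = -(-1) ^ b := by rw [h.neg_one_pow, neg_one_mul]

section FiniteDifference

variable {n : ℕ} {f : ℝ → ℝ}

lemma sum_choose_mul_neg_one_pow_mul_sub_eq_zero (hf : (fwdDiff 1)^[n + 1] f = 0) (x : ℝ) :
    ∑ i ∈ range (n + 2), ((n + 1).choose i : ℝ) * (-1) ^ i * f (x - i) = 0 := by
  have := congrFun hf (x - (n + 1))
  rw [fwdDiff_iter_eq_sum_shift, ← sum_range_reflect, Pi.zero_apply] at this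
  rw [← this]
  refine sum_congr rfl fun i hi ↦ ?_
  have hi : i ≤ n + 1 := by simpa [Nat.lt_succ_iff] using hi
  rw [show n + 1 + 1 - 1 - i = n + 1 - i by omega, Nat.choose_symm hi, Nat.sub_sub_self hi,
    zsmul_eq_mul, nsmul_eq_mul, Nat.cast_sub hi]
  push_cast
  ring_nf

lemma eulerCoeff_eq_zero {k : ℕ} (hf : (fwdDiff 1)^[n + 1] f = 0) (h0 : f 0 = 0)
    (hk : n ≤ k) : eulerCoeff n f k = 0 := by
  have hD := sum_choose_mul_neg_one_pow_mul_sub_eq_zero hf (k + 1)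
  rw [sum_subset (range_subset_range.2 (show n + 2 ≤ k + 2 by omega)), sum_range_succ] at hD
  · rw [Nat.cast_add_one, sub_self, h0, mul_zero, add_zero] at hD
    rw [eulerCoeff, ← hD]
    refine sum_congr rfl fun i _ ↦ ?_
    ring_nf
  · intro i hi hni
    rw [Nat.choose_eq_zero_of_lt (by simp at hni; omega), Nat.cast_zero, zero_mul, zero_mul]

lemma eulerCoeff_eq_eulerCoeff_neg {q r : ℕ} (hf : (fwdDiff 1)^[n + 1] f = 0) (h0 : f 0 = 0)
    (h : q + r + 1 = n) : eulerCoeff n f q = eulerCoeff n (fun x ↦ (-1) ^ n * f (-x)) r := by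
  -- Split the vanishing difference at `q + 1` into the terms `i ≤ q`, which form
  -- `eulerCoeff n f q`, and `i > q`, which under `i ↦ n + 1 - i` form the reflected coefficient.
  have hD := sum_choose_mul_neg_one_pow_mul_sub_eq_zero hf (q + 1)
  rw [show n + 2 = (q + 1) + (r + 2) by omega, sum_range_add] at hD
  have hlow : ∑ i ∈ range (q + 1), ((n + 1).choose i : ℝ) * (-1) ^ i * f ((q + 1 : ℕ) - i)
      = eulerCoeff n f q := by
    refine sum_congr rfl fun i _ ↦ ?_
    push_cast
    ring_nf
  have hext : eulerCoeff n (fun x ↦ (-1) ^ n * f (-x)) r = ∑ s ∈ range (r + 2),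
      ((n + 1).choose s : ℝ) * (-1) ^ s * ((-1) ^ n * f (-((r : ℝ) - s + 1))) := by
    have hr : (r : ℝ) - (r + 1 : ℕ) + 1 = 0 := by push_cast; ring
    rw [sum_range_succ, hr, neg_zero, h0, mul_zero, mul_zero, add_zero, eulerCoeff]
  have hhigh : ∑ x ∈ range (r + 2),
      ((n + 1).choose (q + 1 + x) : ℝ) * (-1) ^ (q + 1 + x) * f ((q + 1 : ℕ) - (q + 1 + x : ℕ))
      = -eulerCoeff n (fun x ↦ (-1) ^ n * f (-x)) r := by
    rw [hext, ← sum_range_reflect, ← sum_neg_distrib]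
    refine sum_congr rfl fun x hx ↦ ?_
    have hx : x ≤ r + 1 := by simpa [Nat.lt_succ_iff] using hx
    have hc : ((q + 1 + (r + 1 - x) : ℕ) : ℝ) = q + 1 + (r + 1) - x := by
      rw [Nat.cast_add, Nat.cast_sub hx]
      push_cast
      ring
    rw [show r + 2 - 1 - x = r + 1 - x by omega,
      Nat.choose_symm_of_eq_add (show n + 1 = (q + 1 + (r + 1 - x)) + x by omega),
      neg_one_pow_eq_neg_neg_one_pow (a := q + 1 + (r + 1 - x)) (b := x + n) ⟨n, by omega⟩,
      pow_add, hc]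
    push_cast
    ring_nf
  push_cast at hD hlow hhigh
  linarith

lemma eq_sum_eulerCoeff_mul_choose (hf : (fwdDiff 1)^[n + 1] f = 0) (h0 : f 0 = 0) (j : ℕ) :
    f (j + 1) = ∑ r ∈ range n, eulerCoeff n f r * (n + j - r).choose n := by
  rw [← sum_eulerCoeff_mul_choose n f j,
    sum_subset (range_subset_range.2 (show j + 1 ≤ n + j + 1 by omega)),
    sum_subset (range_subset_range.2 (show n ≤ n + j + 1 by omega))]
  · intro r _ hr
    rw [eulerCoeff_eq_zero hf h0 (by simpa using hr), zero_mul]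
  · intro r hr hrj
    rw [Nat.choose_eq_zero_of_lt (by simp at hr hrj; omega), Nat.cast_zero, mul_zero]

lemma eq_sum_eulerCoeff_neg_mul_choose (hf : (fwdDiff 1)^[n + 1] f = 0) (h0 : f 0 = 0)
    (k : ℕ) : f (k + 1) =
      ∑ s ∈ range n, eulerCoeff n (fun x ↦ (-1) ^ n * f (-x)) s * (k + s + 1).choose n := by
  rw [eq_sum_eulerCoeff_mul_choose hf h0 k, ← sum_range_reflect]
  refine sum_congr rfl fun s hs ↦ ?_
  have hs : s < n := mem_range.1 hs
  rw [eulerCoeff_eq_eulerCoeff_neg hf h0 (show n - 1 - s + s + 1 = n by omega),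
    show n + k - (n - 1 - s) = k + s + 1 by omega]

end FiniteDifference

lemma fwdDiff_iter_dfall (l : ℝ) (n : ℕ) : (fwdDiff 1)^[n + 1] (fun x ↦ dfall l x n) = 0 := by
  have h : (fun x ↦ dfall l x n) =
      (∏ i ∈ range n, (Polynomial.X - Polynomial.C ((i : ℝ) * l))).eval :=
    funext fun x ↦ by simp [dfall, Polynomial.eval_prod]
  rw [h]
  refine Polynomial.fwdDiff_iter_eq_zero_of_degree_lt ?_
  rw [Polynomial.natDegree_prod_of_monic _ _ fun i _ ↦ Polynomial.monic_X_sub_C _]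
  simp only [Polynomial.natDegree_X_sub_C, sum_const, card_range, smul_eq_mul, mul_one]
  omega

lemma dfall_zero (l : ℝ) {n : ℕ} (hn : n ≠ 0) : dfall l 0 n = 0 :=
  prod_eq_zero (mem_range.2 (Nat.pos_of_ne_zero hn)) (by simp)

lemma neg_one_pow_mul_dfall_neg (l x : ℝ) (n : ℕ) : (-1) ^ n * dfall l (-x) n = dfall (-l) x n := by
  rw [dfall, dfall, ← card_range n, ← prod_const, card_range, ← prod_mul_distrib]
  exact prod_congr rfl fun i _ ↦ by ring

lemma degEulerianNum_self (l : ℝ) {n : ℕ} (hn : n ≠ 0) : degEulerianNum l n n = 0 :=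
  eulerCoeff_eq_zero (fwdDiff_iter_dfall l n) (dfall_zero l hn) le_rfl

theorem dfall_eq_sum_degEulerianNum_mul_choose (l : ℝ) {n : ℕ} (hn : n ≠ 0) (k : ℕ) :
    dfall l (k + 1) n = ∑ j ∈ range (n + 1), degEulerianNum (-l) n j * (k + j + 1).choose n := by
  have h := eq_sum_eulerCoeff_neg_mul_choose (fwdDiff_iter_dfall l n) (dfall_zero l hn) k
  simp only [neg_one_pow_mul_dfall_neg] at h
  rw [h, sum_range_succ, degEulerianNum_self (-l) hn, zero_mul, add_zero]
  rfl

theorem stmt12_general (l : ℝ) (m n : ℕ) (hn : 1 ≤ n) :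
    ∑ k ∈ Finset.Icc 1 m, dfall l k n =
      ∑ j ∈ Finset.range (n + 1), degEulerianNum (-l) n j * ((m + j + 1).choose (n + 1) : ℝ) := by
  have hn0 : n ≠ 0 := Nat.one_le_iff_ne_zero.mp hn
  induction m with
  | zero =>
    rw [Icc_eq_empty (by omega), sum_empty, sum_range_succ, degEulerianNum_self (-l) hn0, zero_mul,
      add_zero]
    refine (sum_eq_zero fun j hj ↦ ?_).symm
    rw [Nat.choose_eq_zero_of_lt (by simp at hj; omega), Nat.cast_zero, mul_zero]
  | succ m ih =>
    rw [sum_Icc_succ_top (by omega), ih, Nat.cast_succ,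
      dfall_eq_sum_degEulerianNum_mul_choose l hn0, ← sum_add_distrib]
    refine sum_congr rfl fun j _ ↦ ?_
    rw [show m + 1 + j + 1 = m + j + 1 + 1 by ring, Nat.choose_succ_succ' (m + j + 1)]
    push_cast
    ring

/-- for `m, n ≥ 1`,
`∑_{k=1}^m (k)_{n,λ} = ∑_{j=0}^n A_{-λ}(n,j) binom(m+j+1, n+1)`. -/
theorem stmt12 (l : ℝ) (m n : ℕ) (hm : 1 ≤ m) (hn : 1 ≤ n) :
    ∑ k ∈ Finset.Icc 1 m, dfall l k n =
      ∑ j ∈ Finset.range (n + 1), degEulerianNum (-l) n j * ((m + j + 1).choose (n + 1) : ℝ) :=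
  stmt12_general l m n hn
end
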